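/- If σ is a positive definite density operator on ℂ^d, then the function ρ ↦ F(ρ, σ) = tr(√(√σ ρ √σ)) is continuous and strictly mid-point concave on the density operators: for distinct ρ₁, ρ₂, F((ρ₁+ρ₂)/2, σ) > (F(ρ₁,σ)+F(ρ₂,σ))/2. -/

import Mathlib

open scoped ComplexOrder
open Matrix

def IsDensity {d : ℕ} (ρ : Matrix (Fin d) (Fin d) ℂ) : Prop :=
  ρ.PosSemidef ∧ ρ.trace = 1

/-- The positive semidefinite square root (junk value `0` off the PSD cone). -/
noncomputable def matSqrt {d : ℕ} (A : Matrix (Fin d) (Fin d) ℂ) :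
    Matrix (Fin d) (Fin d) ℂ :=
  by classical exact if h : A.PosSemidef then ((h.1.eigenvectorUnitary : Matrix (Fin d) (Fin d) ℂ) *
      diagonal (fun i => ((Real.sqrt (h.1.eigenvalues i) : ℝ) : ℂ)) *
      (star h.1.eigenvectorUnitary : Matrix (Fin d) (Fin d) ℂ)) else 0

/-- The fidelity `F(ρ,σ) = tr √(√σ ρ √σ)`. -/
noncomputable def fidelity {d : ℕ} (ρ σ : Matrix (Fin d) (Fin d) ℂ) : ℝ :=
  ((matSqrt (matSqrt σ * ρ * matSqrt σ)).trace).re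

namespace Stmt12Aux

variable {d : ℕ}

abbrev Mat (d : ℕ) := Matrix (Fin d) (Fin d) ℂ

open scoped MatrixOrder in
lemma matSqrt_eq {A : Mat d} (hA : A.PosSemidef) : matSqrt A = CFC.sqrt A := by
  rw [CFC.sqrt_eq_real_sqrt A hA.nonneg, cfcₙ_eq_cfc, hA.1.cfc_eq, IsHermitian.cfc,
    Unitary.conjStarAlgAut_apply]
  unfold matSqrt
  rw [dif_pos hA]
  rfl

open scoped MatrixOrder in
lemma matSqrt_posSemidef {A : Mat d} (hA : A.PosSemidef) : (matSqrt A).PosSemidef := by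
  rw [matSqrt_eq hA]; exact Matrix.nonneg_iff_posSemidef.mp (CFC.sqrt_nonneg A)

open scoped MatrixOrder in
lemma matSqrt_mul_self {A : Mat d} (hA : A.PosSemidef) : matSqrt A * matSqrt A = A := by
  rw [matSqrt_eq hA]; exact CFC.sqrt_mul_sqrt_self A hA.nonneg

open scoped MatrixOrder in
lemma matSqrt_sq {A : Mat d} (hA : A.PosSemidef) (B : Mat d) (hB : B.PosSemidef)
    (h : B * B = A) : matSqrt A = B := by
  rw [matSqrt_eq hA]
  exact CFC.sqrt_unique h hB.nonneg

/-- trace of a PSD matrix has nonnegative real part -/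
lemma trace_re_nonneg {A : Mat d} (hA : A.PosSemidef) : 0 ≤ A.trace.re := by
  have : A.trace.re = ∑ i, (A i i).re := by
    simp [Matrix.trace, Matrix.diag, Complex.re_sum]
  rw [this]
  refine Finset.sum_nonneg fun i _ => ?_
  have := hA.re_dotProduct_nonneg (Pi.single i 1)
  simpa [dotProduct, Matrix.mulVec, Pi.single_apply, Finset.sum_ite_eq,
    Finset.sum_ite_eq'] using this



lemma frobenius_eq (Y : Mat d) : (Yᴴ * Y).trace.re = ∑ j, ∑ i, Complex.normSq (Y i j) := by
  have : (Yᴴ * Y).trace = ∑ j, ∑ i, (Complex.normSq (Y i j) : ℂ) := by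
    simp only [Matrix.trace, Matrix.diag, Matrix.mul_apply, Matrix.conjTranspose_apply]
    congr 1; ext j; congr 1; ext i
    rw [Complex.normSq_eq_conj_mul_self]; rfl
  rw [this]
  simp [Complex.re_sum]

lemma eq_of_frobenius_eq_zero {Y : Mat d} (h : (Yᴴ * Y).trace.re = 0) : Y = 0 := by
  rw [frobenius_eq] at h
  ext i j
  have h1 : ∀ j ∈ Finset.univ, (0:ℝ) ≤ ∑ i, Complex.normSq (Y i j) :=
    fun j _ => Finset.sum_nonneg fun i _ => Complex.normSq_nonneg _
  have h2 := (Finset.sum_eq_zero_iff_of_nonneg h1).mp h j (Finset.mem_univ j)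
  have h3 := (Finset.sum_eq_zero_iff_of_nonneg
    (fun i _ => Complex.normSq_nonneg (Y i j))).mp h2 i (Finset.mem_univ i)
  simpa using Complex.normSq_eq_zero.mp h3

section unitary
variable {U : Mat d}

lemma conj_diag_mul (hU : star U * U = 1) (v w : Fin d → ℂ) :
    (U * diagonal v * star U) * (U * diagonal w * star U) = U * diagonal (v * w) * star U := by
  have : U * diagonal v * star U * (U * diagonal w * star U)
      = U * (diagonal v * (star U * U) * diagonal w) * star U := by
    noncomm_ring
  rw [this, hU, mul_one, diagonal_mul_diagonal]
  rfl

lemma trace_conj_diag (hU : star U * U = 1) (v : Fin d → ℂ) :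
    (U * diagonal v * star U).trace = ∑ i, v i := by
  rw [Matrix.trace_mul_cycle, hU, Matrix.one_mul, Matrix.trace_diagonal]

lemma conj_smul_one (hU : star U * U = 1) (c : ℂ) : U * (c • (1 : Mat d)) * star U = c • (1 : Mat d) := by
  have h1 : U * star U = 1 := mul_eq_one_comm.mp hU
  rw [Matrix.mul_smul, Matrix.mul_one, Matrix.smul_mul, h1]

lemma conj_diag_hermitian (v : Fin d → ℝ) :
    (U * diagonal (fun i => (v i : ℂ)) * star U).IsHermitian := by
  have hd : (diagonal (fun i => (v i : ℂ)))ᴴ = diagonal (fun i => (v i : ℂ)) := by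
    rw [Matrix.diagonal_conjTranspose]
    ext i j
    rcases eq_or_ne i j with rfl | h
    · simp [Complex.conj_ofReal]
    · simp [Matrix.diagonal_apply_ne _ h]
  rw [Matrix.IsHermitian, Matrix.conjTranspose_mul, Matrix.conjTranspose_mul, hd,
    Matrix.star_eq_conjTranspose, Matrix.conjTranspose_conjTranspose, Matrix.mul_assoc]

lemma conj_diag_posSemidef (v : Fin d → ℝ) (hv : ∀ i, 0 ≤ v i) :
    (U * diagonal (fun i => (v i : ℂ)) * star U).PosSemidef := by
  have hd : (diagonal (fun i => (v i : ℂ))).PosSemidef := by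
    refine Matrix.posSemidef_diagonal_iff.mpr fun i => ?_
    rw [Complex.zero_le_real]
    exact hv i
  have := hd.mul_mul_conjTranspose_same U
  simpa [Matrix.star_eq_conjTranspose] using this

end unitary

/-- The key variational inequality with quadratic defect. -/
lemma key_ineq {A T S : Mat d} (hA : A.PosSemidef) (hT : T.IsHermitian) (hSpsd : S.PosSemidef)
    (hTS : T * S = 1) (hST : S * T = 1) {c : ℝ}
    (hc : (S - c • (1 : Mat d)).PosSemidef) :
    2 * (matSqrt A).trace.re
      + c * (((matSqrt A - T) * (matSqrt A - T)).trace.re)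
      ≤ (A * S).trace.re + T.trace.re := by
  set X := matSqrt A with hX
  set Y := X - T with hY
  have hXpsd : X.PosSemidef := matSqrt_posSemidef hA
  have hXH : X.IsHermitian := hXpsd.isHermitian
  have hYH : Y.IsHermitian := hXH.sub hT
  -- the algebraic identity
  have hid : Y * S * Y = X * S * X - X - X + T := by
    have e1 : X * S * T = X := by rw [Matrix.mul_assoc, hST, Matrix.mul_one]
    have e2 : T * S * X = X := by rw [hTS, Matrix.one_mul]
    have e3 : T * S * T = T := by rw [hTS, Matrix.one_mul]
    calc Y * S * Y = X * S * X - X * S * T - (T * S * X - T * S * T) := by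
          rw [hY]; noncomm_ring
      _ = X * S * X - X - X + T := by rw [e1, e2, e3]; noncomm_ring
  -- trace identity
  have htr : (Y * S * Y).trace = (A * S).trace - 2 * X.trace + T.trace := by
    have : (Y * S * Y).trace = (X * S * X).trace - X.trace - X.trace + T.trace := by
      rw [hid]; simp [Matrix.trace_add, Matrix.trace_sub]
    rw [this, Matrix.trace_mul_cycle X S X, matSqrt_mul_self hA]
    ring
  -- positivity of the defect relative to c
  have hpos : 0 ≤ (Y * (S - c • (1 : Mat d)) * Y).trace.re := by
    have hpsd : (Yᴴ * (S - c • (1 : Mat d)) * Y).PosSemidef :=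
      hc.conjTranspose_mul_mul_same Y
    rw [hYH.eq] at hpsd
    exact trace_re_nonneg hpsd
  have hexp : (Y * (S - c • (1 : Mat d)) * Y).trace
      = (Y * S * Y).trace - c * (Y * Y).trace := by
    have : Y * (S - c • (1 : Mat d)) * Y = Y * S * Y - c • (Y * Y) := by
      have e : Y * (c • (1 : Mat d)) * Y = c • (Y * Y) := by
        rw [Matrix.mul_smul, Matrix.mul_one, Matrix.smul_mul]
      rw [Matrix.mul_sub Y S (c • 1), Matrix.sub_mul, e]
    rw [this, Matrix.trace_sub, Matrix.trace_smul]
    simp [Complex.real_smul]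
  have h1 : c * (Y * Y).trace.re ≤ (Y * S * Y).trace.re := by
    have := hpos
    rw [hexp] at this
    have hre : ((Y * S * Y).trace - (c : ℂ) * (Y * Y).trace).re
        = (Y * S * Y).trace.re - c * (Y * Y).trace.re := by
      simp [Complex.sub_re, Complex.mul_re, Complex.ofReal_re, Complex.ofReal_im]
    rw [hre] at this
    linarith
  have h2 : (Y * S * Y).trace.re = (A * S).trace.re - 2 * X.trace.re + T.trace.re := by
    rw [htr]
    simp [Complex.sub_re, Complex.add_re, Complex.mul_re]
  linarith

section spectral

variable {M : Mat d} (hM : M.PosSemidef)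

/-- `T ε = U diag (√(μ i + ε)) U*` -/
noncomputable def specT (hM : M.PosSemidef) (ε : ℝ) : Mat d :=
  (hM.isHermitian.eigenvectorUnitary : Mat d) *
    diagonal (fun i => (Real.sqrt (hM.isHermitian.eigenvalues i + ε) : ℂ)) *
    star (hM.isHermitian.eigenvectorUnitary : Mat d)

/-- `S ε = U diag ((√(μ i + ε))⁻¹) U*` -/
noncomputable def specS (hM : M.PosSemidef) (ε : ℝ) : Mat d :=
  (hM.isHermitian.eigenvectorUnitary : Mat d) *
    diagonal (fun i => (((Real.sqrt (hM.isHermitian.eigenvalues i + ε))⁻¹ : ℝ) : ℂ)) *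
    star (hM.isHermitian.eigenvectorUnitary : Mat d)

lemma specU_unitary : star (hM.isHermitian.eigenvectorUnitary : Mat d) *
    (hM.isHermitian.eigenvectorUnitary : Mat d) = 1 :=
  Matrix.mem_unitaryGroup_iff'.mp (hM.isHermitian.eigenvectorUnitary).2

lemma specT_hermitian (ε : ℝ) : (specT hM ε).IsHermitian := by
  unfold specT
  exact conj_diag_hermitian _

lemma specT_posSemidef {ε : ℝ} (hε : 0 ≤ ε) : (specT hM ε).PosSemidef := by
  unfold specT
  exact conj_diag_posSemidef _ fun i => Real.sqrt_nonneg _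

lemma specS_posSemidef (ε : ℝ) : (specS hM ε).PosSemidef := by
  unfold specS
  exact conj_diag_posSemidef _ fun i => inv_nonneg.mpr (Real.sqrt_nonneg _)

lemma specT_sq {ε : ℝ} (hε : 0 ≤ ε) :
    specT hM ε * specT hM ε = M + (ε : ℂ) • (1 : Mat d) := by
  unfold specT
  rw [conj_diag_mul (specU_unitary hM)]
  have hdiag : (fun i => (Real.sqrt (hM.isHermitian.eigenvalues i + ε) : ℂ)) *
      (fun i => (Real.sqrt (hM.isHermitian.eigenvalues i + ε) : ℂ))
      = fun i => ((hM.isHermitian.eigenvalues i : ℂ) + (ε : ℂ)) := by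
    funext i
    have h0 : 0 ≤ hM.isHermitian.eigenvalues i + ε :=
      add_nonneg (hM.eigenvalues_nonneg i) hε
    have : (Real.sqrt (hM.isHermitian.eigenvalues i + ε) : ℂ) *
        (Real.sqrt (hM.isHermitian.eigenvalues i + ε) : ℂ)
        = ((Real.sqrt (hM.isHermitian.eigenvalues i + ε) *
            Real.sqrt (hM.isHermitian.eigenvalues i + ε) : ℝ) : ℂ) := by
      push_cast; ring
    rw [Pi.mul_apply, this, Real.mul_self_sqrt h0]
    push_cast; ring
  rw [hdiag]
  have : diagonal (fun i => ((hM.isHermitian.eigenvalues i : ℂ) + (ε : ℂ)))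
      = diagonal (fun i => (hM.isHermitian.eigenvalues i : ℂ)) + (ε : ℂ) • 1 := by
    rw [Matrix.smul_one_eq_diagonal, Matrix.diagonal_add]
  rw [this, Matrix.mul_add, Matrix.add_mul]
  congr 1
  · exact (hM.isHermitian.spectral_theorem).symm
  · exact conj_smul_one (specU_unitary hM) _

lemma specT_mul_specS {ε : ℝ} (hε : 0 < ε) :
    specT hM ε * specS hM ε = 1 ∧ specS hM ε * specT hM ε = 1 := by
  have hne : ∀ i, Real.sqrt (hM.isHermitian.eigenvalues i + ε) ≠ 0 := fun i =>
    Real.sqrt_ne_zero'.mpr (lt_of_lt_of_le hε (le_add_of_nonneg_left (hM.eigenvalues_nonneg i)))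
  constructor
  · rw [specT, specS, conj_diag_mul (specU_unitary hM)]
    have : (fun i => (Real.sqrt (hM.isHermitian.eigenvalues i + ε) : ℂ)) *
        (fun i => (((Real.sqrt (hM.isHermitian.eigenvalues i + ε))⁻¹ : ℝ) : ℂ)) = 1 := by
      funext i
      rw [Pi.mul_apply]
      push_cast
      exact mul_inv_cancel₀ (by exact_mod_cast hne i)
    rw [this, show Matrix.diagonal (1 : Fin d → ℂ) = 1 from Matrix.diagonal_one, Matrix.mul_one]
    exact mul_eq_one_comm.mp (specU_unitary hM)
  · rw [specT, specS, conj_diag_mul (specU_unitary hM)]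
    have : (fun i => (((Real.sqrt (hM.isHermitian.eigenvalues i + ε))⁻¹ : ℝ) : ℂ)) *
        (fun i => (Real.sqrt (hM.isHermitian.eigenvalues i + ε) : ℂ)) = 1 := by
      funext i
      rw [Pi.mul_apply]
      push_cast
      exact inv_mul_cancel₀ (by exact_mod_cast hne i)
    rw [this, show Matrix.diagonal (1 : Fin d → ℂ) = 1 from Matrix.diagonal_one, Matrix.mul_one]
    exact mul_eq_one_comm.mp (specU_unitary hM)

lemma specT_trace_re (ε : ℝ) :
    (specT hM ε).trace.re = ∑ i, Real.sqrt (hM.isHermitian.eigenvalues i + ε) := by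
  rw [specT, trace_conj_diag (specU_unitary hM)]
  rw [Complex.re_sum]
  simp

lemma matSqrt_eq_specT_zero : matSqrt M = specT hM 0 := by
  refine matSqrt_sq hM _ (specT_posSemidef hM le_rfl) ?_
  rw [specT_sq hM le_rfl]
  simp

lemma trace_eq_sum_eigenvalues : M.trace = ∑ i, (hM.isHermitian.eigenvalues i : ℂ) := by
  conv_lhs => rw [hM.isHermitian.spectral_theorem]
  exact trace_conj_diag (specU_unitary hM) _

end spectral

lemma real_smul_eq {r : ℝ} {X : Mat d} : r • X = (r : ℂ) • X := by
  ext i j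
  simp [Complex.real_smul]

lemma posSemidef_real_smul {X : Mat d} (hX : X.PosSemidef) {r : ℝ} (hr : 0 ≤ r) :
    (r • X).PosSemidef := by
  constructor
  · rw [Matrix.IsHermitian, Matrix.conjTranspose_smul, star_trivial, hX.1.eq]
  · have h' : ((r : ℂ) • X).PosSemidef := hX.smul (by exact_mod_cast hr)
    rw [← real_smul_eq] at h'
    exact h'.2

lemma sqrt_add_le (a b : ℝ) (ha : 0 ≤ a) (hb : 0 ≤ b) :
    Real.sqrt (a + b) ≤ Real.sqrt a + Real.sqrt b := by
  rw [show a + b = a + b from rfl]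
  have h1 : a + b ≤ (Real.sqrt a + Real.sqrt b) ^ 2 := by
    have := Real.sq_sqrt ha
    have := Real.sq_sqrt hb
    nlinarith [Real.sqrt_nonneg a, Real.sqrt_nonneg b]
  calc Real.sqrt (a + b) ≤ Real.sqrt ((Real.sqrt a + Real.sqrt b) ^ 2) := Real.sqrt_le_sqrt h1
    _ = Real.sqrt a + Real.sqrt b :=
      Real.sqrt_sq (add_nonneg (Real.sqrt_nonneg a) (Real.sqrt_nonneg b))

/-- eigenvalues of a PSD matrix are bounded by the (real) trace -/
lemma eigenvalue_le_trace_re {M : Mat d} (hM : M.PosSemidef) (i : Fin d) :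
    hM.isHermitian.eigenvalues i ≤ M.trace.re := by
  have h : M.trace.re = ∑ j, hM.isHermitian.eigenvalues j := by
    rw [trace_eq_sum_eigenvalues hM, Complex.re_sum]
    simp
  rw [h]
  exact Finset.single_le_sum (fun j _ => hM.eigenvalues_nonneg j) (Finset.mem_univ i)

lemma specS_sub_smul_posSemidef {M : Mat d} (hM : M.PosSemidef) {ε : ℝ}
    (hε : 0 < ε) (hε1 : ε ≤ 1) :
    (specS hM ε - ((Real.sqrt (M.trace.re + 1))⁻¹ : ℝ) • (1 : Mat d)).PosSemidef := by
  set c : ℝ := (Real.sqrt (M.trace.re + 1))⁻¹ with hc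
  have htr0 : 0 ≤ M.trace.re := trace_re_nonneg hM
  have hCpos : 0 < Real.sqrt (M.trace.re + 1) := Real.sqrt_pos.mpr (by linarith)
  have key : specS hM ε - c • (1 : Mat d) =
      (hM.isHermitian.eigenvectorUnitary : Mat d) *
        diagonal (fun i => ((((Real.sqrt (hM.isHermitian.eigenvalues i + ε))⁻¹ - c : ℝ)) : ℂ)) *
        star (hM.isHermitian.eigenvectorUnitary : Mat d) := by
    have h1 : c • (1 : Mat d) =
        (hM.isHermitian.eigenvectorUnitary : Mat d) * diagonal (fun _ => (c : ℂ)) *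
          star (hM.isHermitian.eigenvectorUnitary : Mat d) := by
      rw [← Matrix.smul_one_eq_diagonal, conj_smul_one (specU_unitary hM), real_smul_eq]
    rw [h1, specS, ← Matrix.sub_mul, ← Matrix.mul_sub, Matrix.diagonal_sub]
    congr 2
    funext i
    push_cast
    ring
  rw [key]
  refine conj_diag_posSemidef _ fun i => ?_
  have hle : Real.sqrt (hM.isHermitian.eigenvalues i + ε) ≤ Real.sqrt (M.trace.re + 1) :=
    Real.sqrt_le_sqrt (by
      have := eigenvalue_le_trace_re hM i
      linarith)
  have hpos : 0 < Real.sqrt (hM.isHermitian.eigenvalues i + ε) :=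
    Real.sqrt_pos.mpr (by have := hM.eigenvalues_nonneg i; linarith)
  have : c ≤ (Real.sqrt (hM.isHermitian.eigenvalues i + ε))⁻¹ := by
    rw [hc]
    exact inv_anti₀ hpos hle
  linarith

lemma q_nonneg {X : Mat d} (hX : X.PosSemidef) {M : Mat d} (hM : M.PosSemidef) (ε : ℝ) :
    0 ≤ ((matSqrt X - specT hM ε) * (matSqrt X - specT hM ε)).trace.re := by
  have hY : (matSqrt X - specT hM ε).IsHermitian :=
    (matSqrt_posSemidef hX).isHermitian.sub (specT_hermitian hM ε)
  have h := Matrix.posSemidef_conjTranspose_mul_self (matSqrt X - specT hM ε)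
  rw [hY.eq] at h
  exact trace_re_nonneg h

lemma strict_aux {A B M : Mat d} (hA : A.PosSemidef) (hB : B.PosSemidef)
    (hM : M.PosSemidef) (hsum : A + B = M + M) (hAB : A ≠ B) :
    (matSqrt A).trace.re + (matSqrt B).trace.re < 2 * (matSqrt M).trace.re := by
  by_contra hcon
  push_neg at hcon
  set c : ℝ := (Real.sqrt (M.trace.re + 1))⁻¹ with hc
  have htr0 : 0 ≤ M.trace.re := trace_re_nonneg hM
  have hcpos : 0 < c := inv_pos.mpr (Real.sqrt_pos.mpr (by linarith))
  set qA : ℝ → ℝ :=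
    fun ε => ((matSqrt A - specT hM ε) * (matSqrt A - specT hM ε)).trace.re with hqA
  set qB : ℝ → ℝ :=
    fun ε => ((matSqrt B - specT hM ε) * (matSqrt B - specT hM ε)).trace.re with hqB
  have hfM : (matSqrt M).trace.re = ∑ i, Real.sqrt (hM.isHermitian.eigenvalues i) := by
    rw [matSqrt_eq_specT_zero hM, specT_trace_re hM 0]
    simp
  -- the quantitative bound on the defects
  have hbound : ∀ ε ∈ Set.Ioc (0:ℝ) 1, qA ε + qB ε ≤ (4 * d * Real.sqrt ε) / c := by
    rintro ε ⟨hε0, hε1⟩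
    obtain ⟨hTS, hST⟩ := specT_mul_specS hM hε0
    have hkA := key_ineq hA (specT_hermitian hM ε) (specS_posSemidef hM ε) hTS hST
      (specS_sub_smul_posSemidef hM hε0 hε1)
    have hkB := key_ineq hB (specT_hermitian hM ε) (specS_posSemidef hM ε) hTS hST
      (specS_sub_smul_posSemidef hM hε0 hε1)
    have hMS : M * specS hM ε = specT hM ε - (ε : ℂ) • specS hM ε := by
      have h2 : specT hM ε * specT hM ε - (ε : ℂ) • (1 : Mat d) = M := by
        rw [specT_sq hM hε0.le]
        abel
      calc M * specS hM ε
          = (specT hM ε * specT hM ε - (ε : ℂ) • (1 : Mat d)) * specS hM ε := by rw [h2]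
        _ = specT hM ε * (specT hM ε * specS hM ε)
              - (ε : ℂ) • ((1 : Mat d) * specS hM ε) := by
            rw [Matrix.sub_mul, Matrix.smul_mul, Matrix.mul_assoc]
        _ = specT hM ε - (ε : ℂ) • specS hM ε := by rw [hTS, Matrix.mul_one, Matrix.one_mul]
    have h3 : (A * specS hM ε).trace.re + (B * specS hM ε).trace.re
        = 2 * (specT hM ε).trace.re - 2 * ε * (specS hM ε).trace.re := by
      have hc3 : (A * specS hM ε).trace + (B * specS hM ε).trace
          = ((specT hM ε).trace - (ε : ℂ) • (specS hM ε).trace)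
            + ((specT hM ε).trace - (ε : ℂ) • (specS hM ε).trace) := by
        rw [← Matrix.trace_add, ← Matrix.add_mul, hsum, Matrix.add_mul, Matrix.trace_add, hMS,
          Matrix.trace_sub, Matrix.trace_smul]
      have := congrArg Complex.re hc3
      simp only [Complex.add_re, Complex.sub_re, smul_eq_mul, Complex.mul_re,
        Complex.ofReal_re, Complex.ofReal_im, zero_mul, sub_zero] at this
      linarith
    have h4 : 0 ≤ (specS hM ε).trace.re := trace_re_nonneg (specS_posSemidef hM ε)
    have hT : (specT hM ε).trace.re ≤ (matSqrt M).trace.re + d * Real.sqrt ε := by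
      rw [specT_trace_re hM ε, hfM]
      calc ∑ i, Real.sqrt (hM.isHermitian.eigenvalues i + ε)
          ≤ ∑ i, (Real.sqrt (hM.isHermitian.eigenvalues i) + Real.sqrt ε) :=
            Finset.sum_le_sum fun i _ =>
              sqrt_add_le _ _ (hM.eigenvalues_nonneg i) hε0.le
        _ = (∑ i, Real.sqrt (hM.isHermitian.eigenvalues i)) + d * Real.sqrt ε := by
            rw [Finset.sum_add_distrib, Finset.sum_const, Finset.card_univ, Fintype.card_fin,
              nsmul_eq_mul]
    have hmain : c * (qA ε + qB ε) ≤ 4 * d * Real.sqrt ε := by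
      have e0 : 0 ≤ ε * (specS hM ε).trace.re := mul_nonneg hε0.le h4
      nlinarith [hkA, hkB, h3, hT, hcon]
    rw [le_div_iff₀ hcpos]
    linarith [hmain]
  -- continuity of the defects in ε
  have hTcont : Continuous (fun ε : ℝ => specT hM ε) := by
    unfold specT
    exact (continuous_const.matrix_mul (Continuous.matrix_diagonal
      (continuous_pi fun i => Complex.continuous_ofReal.comp
        (Real.continuous_sqrt.comp (continuous_const.add continuous_id))))).matrix_mul
        continuous_const
  have hqAcont : Continuous qA := by
    rw [hqA]
    exact Complex.continuous_re.comp
      (((continuous_const.sub hTcont).matrix_mul (continuous_const.sub hTcont)).matrix_trace)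
  have hqBcont : Continuous qB := by
    rw [hqB]
    exact Complex.continuous_re.comp
      (((continuous_const.sub hTcont).matrix_mul (continuous_const.sub hTcont)).matrix_trace)
  -- bound tends to zero
  have hbtend : Filter.Tendsto (fun ε : ℝ => (4 * d * Real.sqrt ε) / c)
      (nhdsWithin 0 (Set.Ioi 0)) (nhds 0) := by
    have : Filter.Tendsto (fun ε : ℝ => (4 * d * Real.sqrt ε) / c) (nhds 0)
        (nhds ((4 * d * Real.sqrt 0) / c)) :=
      ((continuous_const.mul Real.continuous_sqrt).div_const c).tendsto 0
    simpa using this.mono_left nhdsWithin_le_nhds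
  have hev : ∀ᶠ ε in nhdsWithin (0:ℝ) (Set.Ioi 0), qA ε + qB ε ≤ (4 * d * Real.sqrt ε) / c :=
    Filter.eventually_of_mem (Ioc_mem_nhdsGT zero_lt_one) hbound
  have hsumtend : Filter.Tendsto (fun ε => qA ε + qB ε) (nhdsWithin 0 (Set.Ioi 0))
      (nhds (qA 0 + qB 0)) :=
    ((hqAcont.add hqBcont).tendsto 0).mono_left nhdsWithin_le_nhds
  have hq0 : qA 0 + qB 0 ≤ 0 := le_of_tendsto_of_tendsto hsumtend hbtend hev
  have hq0' : ((matSqrt A - specT hM 0) * (matSqrt A - specT hM 0)).trace.re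
      + ((matSqrt B - specT hM 0) * (matSqrt B - specT hM 0)).trace.re ≤ 0 := by
    simpa using hq0
  have h1 := q_nonneg hA hM 0
  have h2 := q_nonneg hB hM 0
  have hqA0 : ((matSqrt A - specT hM 0) * (matSqrt A - specT hM 0)).trace.re = 0 := by
    linarith
  have hqB0 : ((matSqrt B - specT hM 0) * (matSqrt B - specT hM 0)).trace.re = 0 := by
    linarith
  -- conclude A = M = B
  have hAM : A = M := by
    have hY : (matSqrt A - specT hM 0).IsHermitian :=
      (matSqrt_posSemidef hA).isHermitian.sub (specT_hermitian hM 0)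
    have h0 : ((matSqrt A - specT hM 0)ᴴ * (matSqrt A - specT hM 0)).trace.re = 0 := by
      rw [hY.eq]
      exact hqA0
    have hz := eq_of_frobenius_eq_zero h0
    have heq : matSqrt A = matSqrt M := by
      rw [matSqrt_eq_specT_zero hM]
      exact sub_eq_zero.mp hz
    calc A = matSqrt A * matSqrt A := (matSqrt_mul_self hA).symm
      _ = matSqrt M * matSqrt M := by rw [heq]
      _ = M := matSqrt_mul_self hM
  have hBM : B = M := by
    have hY : (matSqrt B - specT hM 0).IsHermitian :=
      (matSqrt_posSemidef hB).isHermitian.sub (specT_hermitian hM 0)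
    have h0 : ((matSqrt B - specT hM 0)ᴴ * (matSqrt B - specT hM 0)).trace.re = 0 := by
      rw [hY.eq]
      exact hqB0
    have hz := eq_of_frobenius_eq_zero h0
    have heq : matSqrt B = matSqrt M := by
      rw [matSqrt_eq_specT_zero hM]
      exact sub_eq_zero.mp hz
    calc B = matSqrt B * matSqrt B := (matSqrt_mul_self hB).symm
      _ = matSqrt M * matSqrt M := by rw [heq]
      _ = M := matSqrt_mul_self hM
  exact hAB (hAM.trans hBM.symm)

lemma isClosed_nonneg_complex : IsClosed {z : ℂ | 0 ≤ z} := by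
  have h : {z : ℂ | 0 ≤ z} = {z : ℂ | 0 ≤ z.re} ∩ {z : ℂ | z.im = 0} := by
    ext z
    simp only [Set.mem_setOf_eq, Set.mem_inter_iff, Complex.le_def, Complex.zero_re,
      Complex.zero_im]
    tauto
  rw [h]
  exact (isClosed_le continuous_const Complex.continuous_re).inter
    (isClosed_eq Complex.continuous_im continuous_const)

lemma isClosed_psd : IsClosed {X : Mat d | X.PosSemidef} := by
  have h : {X : Mat d | X.PosSemidef} =
      {X : Mat d | Xᴴ = X} ∩ ⋂ x : Fin d → ℂ,
        {X : Mat d | 0 ≤ dotProduct (star x) (X *ᵥ x)} := by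
    ext X
    simp only [Set.mem_setOf_eq, Set.mem_inter_iff, Set.mem_iInter]
    exact Matrix.posSemidef_iff_dotProduct_mulVec
  rw [h]
  refine IsClosed.inter (isClosed_eq (continuous_id.matrix_conjTranspose) continuous_id)
    (isClosed_iInter fun x => ?_)
  have hcont : Continuous fun X : Mat d => dotProduct (star x) (X *ᵥ x) :=
    Continuous.dotProduct continuous_const (continuous_id.matrix_mulVec continuous_const)
  exact isClosed_nonneg_complex.preimage hcont

lemma isCompact_entryBall (r : ℝ) :
    IsCompact {X : Mat d | ∀ i j, ‖X i j‖ ≤ r} := by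
  have h : {X : Mat d | ∀ i j, ‖X i j‖ ≤ r} =
      Set.univ.pi (fun _ : Fin d => Set.univ.pi fun _ : Fin d =>
        Metric.closedBall (0 : ℂ) r) := by
    ext X
    constructor
    · exact fun hX i _ j _ => show dist (X i j) 0 ≤ r by
        rw [Complex.dist_eq, sub_zero]; exact hX i j
    · intro hX i j
      have h2 : dist (X i j) 0 ≤ r := hX i (Set.mem_univ i) j (Set.mem_univ j)
      rwa [Complex.dist_eq, sub_zero] at h2
  rw [h]
  exact isCompact_univ_pi fun i => isCompact_univ_pi fun j =>
    ProperSpace.isCompact_closedBall _ _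

lemma normSq_entry_le_frobenius (Y : Mat d) (i j : Fin d) :
    Complex.normSq (Y i j) ≤ (Yᴴ * Y).trace.re := by
  rw [frobenius_eq]
  calc Complex.normSq (Y i j)
      ≤ ∑ i', Complex.normSq (Y i' j) :=
        Finset.single_le_sum (f := fun i' => Complex.normSq (Y i' j))
          (fun _ _ => Complex.normSq_nonneg _) (Finset.mem_univ i)
    _ ≤ ∑ j', ∑ i', Complex.normSq (Y i' j') :=
        Finset.single_le_sum (f := fun j' => ∑ i', Complex.normSq (Y i' j'))
          (fun j' _ => Finset.sum_nonneg fun _ _ => Complex.normSq_nonneg _)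
          (Finset.mem_univ j)

lemma density_frobenius_le_one {ρ : Mat d} (h : IsDensity ρ) : (ρᴴ * ρ).trace.re ≤ 1 := by
  obtain ⟨hpsd, htr⟩ := h
  have hH := hpsd.isHermitian
  have hsq : ρ * ρ = (hH.eigenvectorUnitary : Mat d) *
      diagonal ((RCLike.ofReal ∘ hH.eigenvalues) * (RCLike.ofReal ∘ hH.eigenvalues)) *
      star (hH.eigenvectorUnitary : Mat d) := by
    conv_lhs => rw [hH.spectral_theorem]
    exact conj_diag_mul (Matrix.mem_unitaryGroup_iff'.mp hH.eigenvectorUnitary.2) _ _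
  have htrsq : (ρ * ρ).trace.re = ∑ i, hH.eigenvalues i ^ 2 := by
    rw [hsq, trace_conj_diag (Matrix.mem_unitaryGroup_iff'.mp hH.eigenvectorUnitary.2),
      Complex.re_sum]
    congr 1
    funext i
    simp [Pi.mul_apply, Complex.mul_re, sq]
  have hsum1 : ∑ i, hH.eigenvalues i = 1 := by
    have := congrArg Complex.re (trace_eq_sum_eigenvalues hpsd)
    rw [htr] at this
    simpa [Complex.re_sum] using this.symm
  have hb : ∑ i, hH.eigenvalues i ^ 2 ≤ (∑ i, hH.eigenvalues i) ^ 2 :=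
    Finset.sum_sq_le_sq_sum_of_nonneg fun i _ => hpsd.eigenvalues_nonneg i
  rw [hH.eq, htrsq]
  rw [hsum1] at hb
  simpa using hb

lemma isCompact_densities : IsCompact {ρ : Mat d | IsDensity ρ} := by
  refine IsCompact.of_isClosed_subset
    (s := {X : Mat d | ∀ i j, ‖X i j‖ ≤ 1}) (isCompact_entryBall 1) ?_ ?_
  · have : {ρ : Mat d | IsDensity ρ} =
        {X : Mat d | X.PosSemidef} ∩ {X : Mat d | X.trace = 1} := rfl
    rw [this]
    exact isClosed_psd.inter (isClosed_eq (continuous_id.matrix_trace) continuous_const)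
  · intro ρ hρ i j
    have h1 := normSq_entry_le_frobenius ρ i j
    have h2 := density_frobenius_le_one hρ
    have h3 : ‖ρ i j‖ ^ 2 ≤ 1 := by
      rw [Complex.normSq_eq_norm_sq] at h1
      linarith
    nlinarith [norm_nonneg (ρ i j)]

lemma continuousOn_matSqrt {K : Set (Mat d)} (hK : IsCompact K)
    (hKpsd : ∀ X ∈ K, X.PosSemidef) : ContinuousOn matSqrt K := by
  classical
  obtain ⟨R, hR⟩ : ∃ R : ℝ, ∀ Y ∈ K, Y.trace.re ≤ R := by
    obtain ⟨R, hR⟩ := (hK.image (Complex.continuous_re.comp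
      (continuous_id.matrix_trace))).bddAbove
    exact ⟨R, fun Y hY => hR (Set.mem_image_of_mem _ hY)⟩
  set TS : Set (Mat d) := {X | X.PosSemidef ∧ X * X ∈ K} with hTS
  have hTSc : IsCompact TS := by
    refine IsCompact.of_isClosed_subset
      (s := {X : Mat d | ∀ i j, ‖X i j‖ ≤ Real.sqrt R})
      (isCompact_entryBall _) ?_ ?_
    · exact isClosed_psd.inter
        (hK.isClosed.preimage (continuous_id.matrix_mul continuous_id))
    · rintro X ⟨hXpsd, hXK⟩ i j
      have h1 := normSq_entry_le_frobenius X i j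
      rw [hXpsd.isHermitian.eq] at h1
      have h2 := hR _ hXK
      rw [Complex.norm_def]
      exact Real.sqrt_le_sqrt (by linarith)
  haveI : CompactSpace ↥TS := isCompact_iff_compactSpace.mp hTSc
  let e : ↥TS ≃ ↥K :=
    { toFun := fun x => ⟨x.1 * x.1, x.2.2⟩
      invFun := fun y => ⟨matSqrt y.1,
        ⟨matSqrt_posSemidef (hKpsd y.1 y.2), by
          rw [matSqrt_mul_self (hKpsd y.1 y.2)]; exact y.2⟩⟩
      left_inv := fun x => Subtype.ext (matSqrt_sq (hKpsd _ x.2.2) x.1 x.2.1 rfl)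
      right_inv := fun y => Subtype.ext (matSqrt_mul_self (hKpsd y.1 y.2)) }
  have hce : Continuous (e : ↥TS → ↥K) :=
    Continuous.subtype_mk (continuous_subtype_val.matrix_mul continuous_subtype_val) _
  have hcs : Continuous (e.symm : ↥K → ↥TS) :=
    hce.continuous_symm_of_equiv_compact_to_t2
  rw [continuousOn_iff_continuous_restrict]
  have hfe : Set.domRestrict K matSqrt = Subtype.val ∘ (e.symm : ↥K → ↥TS) := rfl
  rw [hfe]
  exact continuous_subtype_val.comp hcs

end Stmt12Aux

open Stmt12Aux

theorem stmt12 {d : ℕ} (σ : Matrix (Fin d) (Fin d) ℂ)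
    (hσ : σ.PosDef) (htr : σ.trace = 1) :
    ContinuousOn (fun ρ => fidelity ρ σ) {ρ | IsDensity ρ} ∧
      ∀ ρ₁ ρ₂ : Matrix (Fin d) (Fin d) ℂ, IsDensity ρ₁ → IsDensity ρ₂ → ρ₁ ≠ ρ₂ →
        (fidelity ρ₁ σ + fidelity ρ₂ σ) / 2 < fidelity ((1/2 : ℝ) • (ρ₁ + ρ₂)) σ := by
  have hσp : σ.PosSemidef := hσ.posSemidef
  have hS : (matSqrt σ).PosSemidef := matSqrt_posSemidef hσp
  have hSH : (matSqrt σ)ᴴ = matSqrt σ := hS.isHermitian.eq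
  have hconj : ∀ {ρ : Matrix (Fin d) (Fin d) ℂ}, ρ.PosSemidef →
      (matSqrt σ * ρ * matSqrt σ).PosSemidef := by
    intro ρ hρ
    have := hρ.conjTranspose_mul_mul_same (matSqrt σ)
    rwa [hSH] at this
  constructor
  · -- continuity
    have hg : Continuous (fun ρ : Mat d => matSqrt σ * ρ * matSqrt σ) :=
      (continuous_const.matrix_mul continuous_id).matrix_mul continuous_const
    have hKc : IsCompact ((fun ρ : Mat d => matSqrt σ * ρ * matSqrt σ) '' {ρ | IsDensity ρ}) :=
      isCompact_densities.image hg
    have hKpsd : ∀ X ∈ (fun ρ : Mat d => matSqrt σ * ρ * matSqrt σ) '' {ρ | IsDensity ρ},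
        X.PosSemidef := by
      rintro X ⟨ρ, hρ, rfl⟩
      exact hconj hρ.1
    have h1 : ContinuousOn (fun X : Mat d => (matSqrt X).trace.re)
        ((fun ρ : Mat d => matSqrt σ * ρ * matSqrt σ) '' {ρ | IsDensity ρ}) :=
      (Complex.continuous_re.comp (continuous_id.matrix_trace)).comp_continuousOn
        (continuousOn_matSqrt hKc hKpsd)
    exact h1.comp hg.continuousOn (Set.mapsTo_image _ _)
  · -- strict concavity
    intro ρ₁ ρ₂ h₁ h₂ hne
    set S := matSqrt σ with hSdef
    have hApsd : (S * ρ₁ * S).PosSemidef := hconj h₁.1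
    have hBpsd : (S * ρ₂ * S).PosSemidef := hconj h₂.1
    have hmid : ((1/2 : ℝ) • (ρ₁ + ρ₂)).PosSemidef :=
      posSemidef_real_smul (h₁.1.add h₂.1) (by norm_num)
    have hMpsd : (S * ((1/2 : ℝ) • (ρ₁ + ρ₂)) * S).PosSemidef := hconj hmid
    have hsum : S * ρ₁ * S + S * ρ₂ * S
        = S * ((1/2 : ℝ) • (ρ₁ + ρ₂)) * S + S * ((1/2 : ℝ) • (ρ₁ + ρ₂)) * S := by
      rw [← Matrix.add_mul, ← Matrix.mul_add, ← Matrix.add_mul, ← Matrix.mul_add,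
        ← add_smul]
      norm_num
    have hdet : IsUnit S.det := by
      have hσS : S * S = σ := matSqrt_mul_self hσp
      have : S.det * S.det = σ.det := by rw [← Matrix.det_mul, hσS]
      have hσdet : σ.det ≠ 0 := ne_of_gt hσ.det_pos
      refine isUnit_iff_ne_zero.mpr fun h0 => hσdet ?_
      rw [← this, h0, mul_zero]
    have hABne : S * ρ₁ * S ≠ S * ρ₂ * S := by
      intro hEq
      apply hne
      have cancel : ∀ ρ : Matrix (Fin d) (Fin d) ℂ, S⁻¹ * (S * ρ * S) * S⁻¹ = ρ := by
        intro ρ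
        rw [show S⁻¹ * (S * ρ * S) * S⁻¹ = (S⁻¹ * S) * ρ * (S * S⁻¹) by noncomm_ring,
          Matrix.nonsing_inv_mul S hdet, Matrix.mul_nonsing_inv S hdet,
          Matrix.one_mul, Matrix.mul_one]
      rw [← cancel ρ₁, ← cancel ρ₂, hEq]
    have key := strict_aux hApsd hBpsd hMpsd hsum hABne
    have e1 : fidelity ρ₁ σ = (matSqrt (S * ρ₁ * S)).trace.re := rfl
    have e2 : fidelity ρ₂ σ = (matSqrt (S * ρ₂ * S)).trace.re := rfl
    have e3 : fidelity ((1/2 : ℝ) • (ρ₁ + ρ₂)) σ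
        = (matSqrt (S * ((1/2 : ℝ) • (ρ₁ + ρ₂)) * S)).trace.re := rfl
    rw [e1, e2, e3]
    linarith
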